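/- arXiv:2109.14139 — 6 statements merged into one kernel-verified Lean document; each statement's English description precedes it below -/
import Mathlib

section
/- If F = {F_n : ℤ → R} is an admissible family of functions, then F_0 is uniquely determined: F_0(2)=F_0(−2)=1, F_0(0)=−2, and F_0(r)=0 otherwise. -/
/-- A family of functions `F : ℕ → ℤ → R` is admissible if
(A1) `F 2 0 = 1` and `F 2 r = 0` for `r ≠ 0`, and
(A2) for all `n ≥ 1` and `r ∈ ℤ`, `F n (r+1) - F n (r-1) = F (n-1) r`. -/
def Admissible {R : Type*} [CommRing R] (F : ℕ → ℤ → R) : Prop :=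
  (F 2 0 = 1 ∧ ∀ r : ℤ, r ≠ 0 → F 2 r = 0) ∧
  (∀ n : ℕ, 1 ≤ n → ∀ r : ℤ, F n (r + 1) - F n (r - 1) = F (n - 1) r)

/-! By (A2), `F 1` and `F 0` are the first and second central differences of `F 2 = δ₀`,
hence `F 0 = δ₋₂ - 2 δ₀ + δ₂`. -/

namespace Admissible

variable {R : Type*} [CommRing R] {F : ℕ → ℤ → R}

lemma two_apply (hF : Admissible F) (r : ℤ) : F 2 r = if r = 0 then 1 else 0 := by
  split_ifs with hr
  · exact hr ▸ hF.1.1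
  · exact hF.1.2 r hr

lemma one_apply (hF : Admissible F) (r : ℤ) :
    F 1 r = (if r = -1 then 1 else 0) - if r = 1 then 1 else 0 := by
  rw [← hF.2 2 (by norm_num) r, hF.two_apply, hF.two_apply]
  simp only [add_eq_zero_iff_eq_neg, sub_eq_zero]

lemma zero_apply (hF : Admissible F) (r : ℤ) :
    F 0 r = (if r = -2 then 1 else 0) - 2 * (if r = 0 then 1 else 0) + if r = 2 then 1 else 0 := by
  rw [← hF.2 1 le_rfl r, hF.one_apply, hF.one_apply]
  have h₁ : r + 1 = -1 ↔ r = -2 := by omega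
  have h₂ : r - 1 = 1 ↔ r = 2 := by omega
  have h₃ : r + 1 = 1 ↔ r = 0 := by omega
  have h₄ : r - 1 = -1 ↔ r = 0 := by omega
  simp only [h₁, h₂, h₃, h₄]
  ring

end Admissible

theorem F0_determined {R : Type*} [CommRing R] (F : ℕ → ℤ → R) (hF : Admissible F) :
    F 0 2 = 1 ∧ F 0 (-2) = 1 ∧ F 0 0 = -2 ∧
      ∀ r : ℤ, r ≠ 2 → r ≠ -2 → r ≠ 0 → F 0 r = 0 := by
  simp only [hF.zero_apply]
  refine ⟨by norm_num, by norm_num, by norm_num, fun r h₂ hn₂ h₀ => ?_⟩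
  simp [h₂, hn₂, h₀]
end

section
/- The map Ψ sending an admissible family F to the sequence (F_{n+2}(0), F_{n+2}(1))_{n≥1} is a bijection between the set of admissible R-valued families and the set of sequences with entries in R × R. -/
section CentralDiff

variable {R : Type*} [CommRing R]

def centralDiff (u : ℤ → R) : ℤ → R := fun r => u (r + 1) - u (r - 1)

theorem eq_of_centralDiff_eq {u v : ℤ → R} (h : centralDiff u = centralDiff v)
    (h0 : u 0 = v 0) (h1 : u 1 = v 1) : u = v := by
  have hr (r : ℤ) : u (r + 1) - u (r - 1) = v (r + 1) - v (r - 1) := congrFun h r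
  suffices ∀ r, u r = v r ∧ u (r + 1) = v (r + 1) from funext fun r => (this r).1
  intro r
  induction r with
  | zero => exact ⟨h0, by simpa using h1⟩
  | succ i ih =>
    refine ⟨ih.2, ?_⟩
    have := hr (i + 1)
    rw [add_sub_cancel_right] at this
    linear_combination this + ih.1
  | pred i ih =>
    refine ⟨?_, by simpa using ih.1⟩
    have := hr (-i)
    rw [show -(i : ℤ) - 1 = -i - 1 by ring] at this
    linear_combination ih.2 - this

/-- The pairs `(u r, u (r + 1))` of the solution of `centralDiff u = f` with `(u 0, u 1) = p`. -/
def centralAntidiffPair (f : ℤ → R) (p : R × R) (r : ℤ) : R × R :=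
  r.inductionOn' 0 p (fun k _ q => (q.2, q.1 + f (k + 1))) (fun k _ q => (q.2 - f k, q.1))

theorem centralAntidiffPair_add_one (f : ℤ → R) (p : R × R) (k : ℤ) :
    centralAntidiffPair f p (k + 1) =
      ((centralAntidiffPair f p k).2, (centralAntidiffPair f p k).1 + f (k + 1)) := by
  rcases le_or_gt 0 k with hk | hk
  · exact Int.inductionOn'_add_one hk
  · have hdown : centralAntidiffPair f p (k + 1 - 1) =
        ((centralAntidiffPair f p (k + 1)).2 - f (k + 1), (centralAntidiffPair f p (k + 1)).1) :=
      Int.inductionOn'_sub_one (by omega)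
    rw [add_sub_cancel_right] at hdown
    rw [hdown]
    ext <;> simp

def centralAntidiff (f : ℤ → R) (p : R × R) (r : ℤ) : R := (centralAntidiffPair f p r).1

theorem centralAntidiff_add_one (f : ℤ → R) (p : R × R) (k : ℤ) :
    centralAntidiff f p (k + 1) = (centralAntidiffPair f p k).2 := by
  simp only [centralAntidiff, centralAntidiffPair_add_one]

theorem centralAntidiff_zero (f : ℤ → R) (p : R × R) : centralAntidiff f p 0 = p.1 :=
  congrArg Prod.fst Int.inductionOn'_self

theorem centralAntidiff_one (f : ℤ → R) (p : R × R) : centralAntidiff f p 1 = p.2 := by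
  rw [← zero_add 1, centralAntidiff_add_one]
  exact congrArg Prod.snd Int.inductionOn'_self

theorem centralDiff_centralAntidiff (f : ℤ → R) (p : R × R) :
    centralDiff (centralAntidiff f p) = f := by
  funext r
  obtain ⟨k, rfl⟩ : ∃ k, r = k + 1 := ⟨r - 1, by ring⟩
  rw [centralDiff, centralAntidiff_add_one, centralAntidiffPair_add_one, add_sub_cancel_right,
    centralAntidiff]
  ring

theorem eq_centralAntidiff (u : ℤ → R) : u = centralAntidiff (centralDiff u) (u 0, u 1) :=
  eq_of_centralDiff_eq (centralDiff_centralAntidiff _ _).symm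
    (centralAntidiff_zero _ (u 0, u 1)).symm (centralAntidiff_one _ (u 0, u 1)).symm

end CentralDiff

section Admissible

variable {R : Type*} [CommRing R]

theorem admissible_iff {F : ℕ → ℤ → R} :
    Admissible F ↔ F 2 = Pi.single 0 1 ∧ ∀ n, centralDiff (F (n + 1)) = F n := by
  have hA1 : (F 2 0 = 1 ∧ ∀ r : ℤ, r ≠ 0 → F 2 r = 0) ↔ F 2 = Pi.single 0 1 := by
    refine ⟨fun ⟨h0, h⟩ => funext fun r => ?_, fun h => ?_⟩
    · rcases eq_or_ne r 0 with rfl | hr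
      · simpa using h0
      · simpa [hr] using h r hr
    · rw [h]
      exact ⟨by simp, fun r hr => by simp [hr]⟩
  have hA2 : (∀ n : ℕ, 1 ≤ n → ∀ r : ℤ, F n (r + 1) - F n (r - 1) = F (n - 1) r) ↔
      ∀ n, centralDiff (F (n + 1)) = F n := by
    simp only [funext_iff, centralDiff]
    refine ⟨fun h n => h (n + 1) (by omega), fun h n hn => ?_⟩
    obtain ⟨m, rfl⟩ := Nat.exists_eq_add_of_le' hn
    exact h m
  rw [Admissible, hA1, hA2]

def admFamily (g : ℕ → R × R) : ℕ → ℤ → R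
  | 0 => centralDiff (centralDiff (Pi.single 0 1))
  | 1 => centralDiff (Pi.single 0 1)
  | 2 => Pi.single 0 1
  | n + 3 => centralAntidiff (admFamily g (n + 2)) (g n)

theorem admFamily_admissible (g : ℕ → R × R) : Admissible (admFamily g) := by
  refine admissible_iff.2 ⟨rfl, fun n => ?_⟩
  match n with
  | 0 | 1 => rfl
  | n + 2 => exact centralDiff_centralAntidiff _ _

theorem admFamily_apply_zero_one (g : ℕ → R × R) (n : ℕ) :
    (admFamily g (n + 3) 0, admFamily g (n + 3) 1) = g n := by
  simp only [admFamily, centralAntidiff_zero, centralAntidiff_one]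

theorem eq_admFamily {F : ℕ → ℤ → R} (hF : Admissible F) :
    F = admFamily (fun n => (F (n + 3) 0, F (n + 3) 1)) := by
  obtain ⟨hF2, hdiff⟩ := admissible_iff.1 hF
  have hstep (n : ℕ) : F (n + 2) = admFamily (fun n => (F (n + 3) 0, F (n + 3) 1)) (n + 2) := by
    induction n with
    | zero => exact hF2
    | succ n ih =>
      rw [admFamily, ← ih, ← hdiff (n + 2)]
      exact eq_centralAntidiff _
  funext n
  match n with
  | 0 => rw [← hdiff 0, ← hdiff 1, hF2]; rfl
  | 1 => rw [← hdiff 1, hF2]; rfl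
  | n + 2 => exact hstep n

end Admissible

/-- The map `Ψ` sending an admissible family `F` to the sequence
`(F_{n+2}(0), F_{n+2}(1))_{n ≥ 1}` (indexed here by `n : ℕ`, corresponding to `F_{n+3}`)
is a bijection `Adm(R) ≅ (R × R)^ℕ`. -/
theorem adm_bijection {R : Type*} [CommRing R] :
    Function.Bijective (fun F : {F : ℕ → ℤ → R // Admissible F} =>
      (fun n : ℕ => (F.1 (n + 3) 0, F.1 (n + 3) 1) : ℕ → R × R)) :=
  Function.bijective_iff_has_inverse.2
    ⟨fun g => ⟨admFamily g, admFamily_admissible g⟩,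
      fun F => Subtype.ext (eq_admFamily F.2).symm, fun g => funext (admFamily_apply_zero_one g)⟩
end

section
/- With M' = M̃ + A as in the type (a) blow-down, k ∈ ℤ^s, k' = (0,k) + (1,−1,−1,0,…,0), and χ_k(x) = −(k·x + xᵀMx)/2, one has χ_{k'}(x') = χ_k(π_*(x')) + (1/2)(x_0−x_1−x_2)(x_0−x_1−x_2−1) for all x' = (x_0,…,x_s) ∈ ℤ^{s+1}, where π_*(x') = (x_1,…,x_s). In particular χ_{k'}(π*(x)) = χ_k(x) where π*(x) = (x_1+x_2, x_1, x_2, …, x_s). -/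
open Matrix

/-- The all-ones vector `u = (1,…,1) ∈ ℤ^m`. -/
def uvec (m : ℕ) : Fin m → ℤ := fun _ => 1

/-- The bilinear form `⟨x,y⟩ = xᵀ M y` associated to the matrix `M`. -/
def bform {m : ℕ} (M : Matrix (Fin m) (Fin m) ℤ) (x y : Fin m → ℤ) : ℤ :=
  x ⬝ᵥ M.mulVec y

/-- `χ_k(x) = -(k·x + ⟨x,x⟩)/2`, valued in `ℚ`. -/
def chi {m : ℕ} (M : Matrix (Fin m) (Fin m) ℤ) (k x : Fin m → ℤ) : ℚ :=
  -(((k ⬝ᵥ x + bform M x x : ℤ) : ℚ)) / 2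

/-- `M` as a matrix over `ℚ`. -/
def Mq {m : ℕ} (M : Matrix (Fin m) (Fin m) ℤ) : Matrix (Fin m) (Fin m) ℚ :=
  M.map ((↑) : ℤ → ℚ)

/-- An integer vector viewed in `ℚ^m`. -/
def vq {m : ℕ} (x : Fin m → ℤ) : Fin m → ℚ := fun i => (x i : ℚ)

/-- `Δ_k = -((k - Mu)ᵀ M⁻¹ (k - Mu) + 3s + tr M)/4 ∈ ℚ`. -/
noncomputable def Delta {m : ℕ} (M : Matrix (Fin m) (Fin m) ℤ) (k : Fin m → ℤ) : ℚ :=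
  -((vq (k - M.mulVec (uvec m)) ⬝ᵥ (Mq M)⁻¹.mulVec (vq (k - M.mulVec (uvec m)))
      + 3 * (m : ℚ) + ((Matrix.trace M : ℤ) : ℚ)) / 4)

/-- `ε_k(x) = Δ_k + 2χ_k(x) + ⟨x,u⟩`. -/
noncomputable def eps {m : ℕ} (M : Matrix (Fin m) (Fin m) ℤ) (k x : Fin m → ℤ) : ℚ :=
  Delta M k + 2 * chi M k x + (bform M x (uvec m) : ℚ)

/-- `Θ_k = (k·u - ⟨u,u⟩)/2`, computed in `ℚ`. -/
def Theta {m : ℕ} (M : Matrix (Fin m) (Fin m) ℤ) (k : Fin m → ℤ) : ℚ :=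
  ((k ⬝ᵥ uvec m - bform M (uvec m) (uvec m) : ℤ) : ℚ) / 2

/-- `θ_k(x) = Θ_k + ⟨x,u⟩`. -/
def theta {m : ℕ} (M : Matrix (Fin m) (Fin m) ℤ) (k x : Fin m → ℤ) : ℚ :=
  Theta M k + (bform M x (uvec m) : ℚ)

/-- The `(s+1)×(s+1)` block matrix `M̃` with `0` in the `(0,0)` entry and `M`
in the lower-right `s×s` block. -/
def Mtilde {s : ℕ} (M : Matrix (Fin s) (Fin s) ℤ) : Matrix (Fin (s + 1)) (Fin (s + 1)) ℤ :=
  Matrix.of fun i j =>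
    if hi : i = 0 then 0 else if hj : j = 0 then 0 else M (i.pred hi) (j.pred hj)

/-- The type (a) matrix `A`: `A₀₀ = -1`, `A₀₁ = A₀₂ = A₁₀ = A₂₀ = 1`,
`A₁₁ = A₁₂ = A₂₁ = A₂₂ = -1`, and `0` elsewhere. -/
def AmatA (s : ℕ) : Matrix (Fin (s + 1)) (Fin (s + 1)) ℤ :=
  Matrix.of fun i j =>
    if i.val = 0 ∧ j.val = 0 then -1
    else if (i.val = 0 ∧ (j.val = 1 ∨ j.val = 2)) ∨ ((i.val = 1 ∨ i.val = 2) ∧ j.val = 0) then 1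
    else if (i.val = 1 ∨ i.val = 2) ∧ (j.val = 1 ∨ j.val = 2) then -1
    else 0

/-- The type (b) matrix `A`: `A₀₀ = A₁₁ = -1`, `A₀₁ = A₁₀ = 1`, and `0` elsewhere. -/
def AmatB (s : ℕ) : Matrix (Fin (s + 1)) (Fin (s + 1)) ℤ :=
  Matrix.of fun i j =>
    if (i.val = 0 ∧ j.val = 0) ∨ (i.val = 1 ∧ j.val = 1) then -1
    else if (i.val = 0 ∧ j.val = 1) ∨ (i.val = 1 ∧ j.val = 0) then 1
    else 0

/-- The type (a) spin^c representative `k' = (0,k) + (1,-1,-1,0,…,0)`. -/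
def ka {s : ℕ} (k : Fin s → ℤ) : Fin (s + 1) → ℤ :=
  Fin.cons 0 k + fun i => if i.val = 0 then 1 else if i.val = 1 ∨ i.val = 2 then -1 else 0

/-- The type (b) spin^c representative `k' = (0,k) + (-1,1,0,…,0)`. -/
def kb {s : ℕ} (k : Fin s → ℤ) : Fin (s + 1) → ℤ :=
  Fin.cons 0 k + fun i => if i.val = 0 then -1 else if i.val = 1 then 1 else 0

/-- The projection `π_*(x₀, x₁, …, x_s) = (x₁, …, x_s)`. -/
def pstar {s : ℕ} (x' : Fin (s + 1) → ℤ) : Fin s → ℤ := fun i => x' i.succ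

/- With `e = (1,-1,-1,0,…,0)` one has `A = -e eᵀ` and `k' = (0,k) + e`, while `M̃` only sees
`π_*(x')`. Hence, for `t = e·x' = x₀ - x₁ - x₂`,
`k'·x' + x'ᵀM'x' = k·π_*(x') + π_*(x')ᵀMπ_*(x') + t - t²`, and the pullback `π^*(x)` has `t = 0`. -/

def vecA (s : ℕ) : Fin (s + 1) → ℤ :=
  fun i => if i.val = 0 then 1 else if i.val = 1 ∨ i.val = 2 then -1 else 0

lemma AmatA_eq_neg_vecMulVec (s : ℕ) : AmatA s = -vecMulVec (vecA s) (vecA s) := by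
  ext i j
  simp only [AmatA, of_apply, neg_apply, vecMulVec_apply, vecA]
  split_ifs <;> simp_all

lemma vecA_dotProduct {s : ℕ} (hs : 2 ≤ s) (x : Fin (s + 1) → ℤ) :
    vecA s ⬝ᵥ x = x ⟨0, s.succ_pos⟩ - x ⟨1, Nat.lt_succ_of_lt hs⟩ - x ⟨2, Nat.lt_succ_of_le hs⟩ := by
  obtain ⟨t, rfl⟩ : ∃ t, s = t + 2 := ⟨s - 2, by omega⟩
  have two : (⟨2, by omega⟩ : Fin (t + 2 + 1)) = 2 := Fin.ext (Nat.mod_eq_of_lt (by omega)).symm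
  simp [dotProduct, vecA, Fin.sum_univ_succ, two, sub_eq_add_neg, add_assoc]

lemma dotProduct_vecMulVec_self_mulVec {n R : Type*} [Fintype n] [CommRing R] (v x : n → R) :
    x ⬝ᵥ vecMulVec v v *ᵥ x = (v ⬝ᵥ x) ^ 2 := by
  rw [vecMulVec_mulVec, op_smul_eq_smul, dotProduct_smul, smul_eq_mul, dotProduct_comm, sq]

lemma Mtilde_mulVec {s : ℕ} (M : Matrix (Fin s) (Fin s) ℤ) (x : Fin (s + 1) → ℤ) :
    Mtilde M *ᵥ x = Fin.cons 0 (M *ᵥ pstar x) := by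
  ext i
  cases i using Fin.cases <;> simp [mulVec, dotProduct, Mtilde, Fin.sum_univ_succ, pstar]

lemma bform_Mtilde {s : ℕ} (M : Matrix (Fin s) (Fin s) ℤ) (x : Fin (s + 1) → ℤ) :
    bform (Mtilde M) x x = bform M (pstar x) (pstar x) := by
  rw [bform, Mtilde_mulVec, ← vecCons, dotProduct_cons, mul_zero, zero_add]
  rfl

lemma ka_dotProduct {s : ℕ} (k : Fin s → ℤ) (x : Fin (s + 1) → ℤ) :
    ka k ⬝ᵥ x = k ⬝ᵥ pstar x + vecA s ⬝ᵥ x := by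
  rw [show ka k = Fin.cons 0 k + vecA s from rfl, add_dotProduct, ← vecCons, cons_dotProduct,
    zero_mul, zero_add]
  rfl

lemma bform_Mtilde_add_AmatA {s : ℕ} (M : Matrix (Fin s) (Fin s) ℤ) (x : Fin (s + 1) → ℤ) :
    bform (Mtilde M + AmatA s) x x = bform M (pstar x) (pstar x) - (vecA s ⬝ᵥ x) ^ 2 := by
  rw [← bform_Mtilde, bform, add_mulVec, dotProduct_add, AmatA_eq_neg_vecMulVec, neg_mulVec,
    dotProduct_neg, dotProduct_vecMulVec_self_mulVec, ← sub_eq_add_neg, bform]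

lemma chi_Mtilde_add_AmatA {s : ℕ} (M : Matrix (Fin s) (Fin s) ℤ) (k : Fin s → ℤ)
    (x : Fin (s + 1) → ℤ) :
    chi (Mtilde M + AmatA s) (ka k) x =
      chi M k (pstar x) + (((vecA s ⬝ᵥ x) * (vecA s ⬝ᵥ x - 1) : ℤ) : ℚ) / 2 := by
  rw [chi, chi, ka_dotProduct, bform_Mtilde_add_AmatA]
  push_cast
  ring

lemma pstar_cons {s : ℕ} (a : ℤ) (x : Fin s → ℤ) : pstar (Fin.cons a x : Fin (s + 1) → ℤ) = x :=
  rfl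

lemma vecA_dotProduct_pullback {s : ℕ} (hs : 2 ≤ s) (x : Fin s → ℤ) :
    vecA s ⬝ᵥ Fin.cons (x ⟨0, Nat.zero_lt_of_lt hs⟩ + x ⟨1, hs⟩) x = 0 := by
  rw [vecA_dotProduct hs]
  change x _ + x _ - x _ - x _ = 0
  ring

/-- For the type (a) blow-down with `k' = (0,k) + (1,-1,-1,0,…,0)`:
`χ_{k'}(x') = χ_k(π_*(x')) + (1/2)(x₀-x₁-x₂)(x₀-x₁-x₂-1)`, and in particular
`χ_{k'}(π^*(x)) = χ_k(x)` where `π^*(x) = (x₁+x₂, x₁, x₂, …, x_s)`. -/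
theorem chi_type_a (s : ℕ) (hs : 2 ≤ s) (M : Matrix (Fin s) (Fin s) ℤ)
    (k : Fin s → ℤ) :
    (∀ x' : Fin (s + 1) → ℤ,
      chi (Mtilde M + AmatA s) (ka k) x' =
        chi M k (pstar x') +
          (((x' ⟨0, by omega⟩ - x' ⟨1, by omega⟩ - x' ⟨2, by omega⟩) *
            (x' ⟨0, by omega⟩ - x' ⟨1, by omega⟩ - x' ⟨2, by omega⟩ - 1) : ℤ) : ℚ) / 2) ∧
    (∀ x : Fin s → ℤ,
      chi (Mtilde M + AmatA s) (ka k) (Fin.cons (x ⟨0, by omega⟩ + x ⟨1, by omega⟩) x) =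
        chi M k x) := by
  refine ⟨fun x' => by rw [chi_Mtilde_add_AmatA, vecA_dotProduct hs], fun x => ?_⟩
  rw [chi_Mtilde_add_AmatA, vecA_dotProduct_pullback hs, pstar_cons]
  simp
end

section
/- Under the type (b) move, Δ_k = Δ_{k'}, where Δ_k = −((k−Mu)ᵀM^{−1}(k−Mu) + 3s + tr(M))/4 and Δ_{k'} = −((k'−M'u')ᵀ(M')^{−1}(k'−M'u') + 3(s+1) + tr(M'))/4, with u, u' the all-ones vectors of sizes s, s+1. Here M and M' are assumed invertible. -/
open Matrix

/-!
Write `v = k - M u` and `y = M⁻¹ v`. The matrix `M' = M̃ + A` sends `(a, y)` to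
`(y₀ - a, M y + (a - y₀) e₀)`, so `w = (y₀ + 1, y)` solves `M' w = (-1, v + e₀) = k' - M' u'`.
Hence `(k' - M'u')ᵀ M'⁻¹ (k' - M'u') = vᵀ y - 1`, which is compensated exactly by
`3 (s + 1) + tr M' = 3 s + tr M + 1`.
-/

section TypeB

variable {n : ℕ} (M : Matrix (Fin (n + 1)) (Fin (n + 1)) ℤ)

lemma Mtilde_add_AmatB_zero_zero : (Mtilde M + AmatB (n + 1)) 0 0 = -1 := by
  simp [Mtilde, AmatB]

lemma Mtilde_add_AmatB_zero_succ (j : Fin (n + 1)) :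
    (Mtilde M + AmatB (n + 1)) 0 j.succ = if j = 0 then 1 else 0 := by
  simp [Mtilde, AmatB, ← Fin.val_eq_zero_iff]

lemma Mtilde_add_AmatB_succ_zero (i : Fin (n + 1)) :
    (Mtilde M + AmatB (n + 1)) i.succ 0 = if i = 0 then 1 else 0 := by
  simp [Mtilde, AmatB, ← Fin.val_eq_zero_iff]

lemma Mtilde_add_AmatB_succ_succ (i j : Fin (n + 1)) :
    (Mtilde M + AmatB (n + 1)) i.succ j.succ = M i j - if i = 0 ∧ j = 0 then 1 else 0 := by
  by_cases hi : i = 0 <;> by_cases hj : j = 0 <;>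
    simp [Mtilde, AmatB, hi, hj, Fin.val_eq_zero_iff, sub_eq_add_neg]

lemma map_Mtilde_add_AmatB_mulVec_cons {R : Type*} [CommRing R] (a : R) (y : Fin (n + 1) → R) :
    (Mtilde M + AmatB (n + 1)).map (Int.cast : ℤ → R) *ᵥ vecCons a y
      = vecCons (y 0 - a) (M.map Int.cast *ᵥ y + Pi.single 0 (a - y 0)) := by
  ext i
  cases i using Fin.cases with
  | zero =>
    rw [mulVec, dotProduct, Fin.sum_univ_succ]
    simp only [map_apply, Mtilde_add_AmatB_zero_zero, Mtilde_add_AmatB_zero_succ, cons_val_zero,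
      cons_val_succ]
    simp [neg_add_eq_sub]
  | succ i =>
    rw [mulVec, dotProduct, Fin.sum_univ_succ]
    simp only [map_apply, Mtilde_add_AmatB_succ_zero, Mtilde_add_AmatB_succ_succ, cons_val_zero,
      cons_val_succ]
    by_cases hi : i = 0
    · subst hi
      simp only [mulVec, dotProduct, map_apply, Pi.add_apply, Pi.single_eq_same, if_true, true_and,
        Int.cast_sub, Int.cast_ite, Int.cast_one, Int.cast_zero, one_mul, sub_mul, ite_mul, zero_mul,
        Finset.sum_sub_distrib, Finset.sum_ite_eq', Finset.mem_univ]
      ring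
    · simp [hi, mulVec, dotProduct]

lemma uvec_succ (m : ℕ) : uvec (m + 1) = vecCons 1 (uvec m) := by
  ext i
  cases i using Fin.cases <;> rfl

lemma kb_eq_vecCons (k : Fin (n + 1) → ℤ) : kb k = vecCons (-1) (k + Pi.single 0 1) := by
  ext i
  cases i using Fin.cases with
  | zero => simp [kb]
  | succ i => by_cases hi : i = 0 <;> simp [kb, hi, Fin.val_eq_zero_iff]

lemma kb_sub_Mtilde_add_AmatB_mulVec_uvec (k : Fin (n + 1) → ℤ) :
    kb k - (Mtilde M + AmatB (n + 1)) *ᵥ uvec (n + 2)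
      = vecCons (-1) (k - M *ᵥ uvec (n + 1) + Pi.single 0 1) := by
  have h : (Mtilde M + AmatB (n + 1)) *ᵥ uvec (n + 2) = vecCons 0 (M *ᵥ uvec (n + 1)) := by
    rw [uvec_succ]
    exact (map_Mtilde_add_AmatB_mulVec_cons M 1 (uvec (n + 1))).trans
      (by simp only [uvec, sub_self, Pi.single_zero, add_zero]; rfl)
  rw [h, kb_eq_vecCons, cons_sub_cons, sub_zero, add_sub_right_comm]

lemma trace_Mtilde_add_AmatB : trace (Mtilde M + AmatB (n + 1)) = trace M - 2 := by
  rw [trace, trace, Fin.sum_univ_succ]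
  simp only [diag_apply, Mtilde_add_AmatB_zero_zero, Mtilde_add_AmatB_succ_succ, and_self,
    Finset.sum_sub_distrib, Finset.sum_ite_eq', Finset.mem_univ, if_true]
  ring

end TypeB

theorem Delta_type_b_general (s : ℕ) (hs : 1 ≤ s) (M : Matrix (Fin s) (Fin s) ℤ)
    (hinv : IsUnit (Mq M).det)
    (hinv' : IsUnit (Mq (Mtilde M + AmatB s)).det) (k : Fin s → ℤ) :
    Delta M k = Delta (Mtilde M + AmatB s) (kb k) := by
  obtain ⟨n, rfl⟩ : ∃ n, s = n + 1 := ⟨s - 1, by omega⟩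
  let := (Mq M).invertibleOfIsUnitDet hinv
  let := (Mq (Mtilde M + AmatB (n + 1))).invertibleOfIsUnitDet hinv'
  rw [Delta, Delta, kb_sub_Mtilde_add_AmatB_mulVec_uvec, trace_Mtilde_add_AmatB]
  set v := k - M *ᵥ uvec (n + 1)
  set y := (Mq M)⁻¹ *ᵥ vq v
  have hMy : Mq M *ᵥ y = vq v := by
    rw [mulVec_mulVec, mul_inv_of_invertible, one_mulVec]
  have hv' : vq (vecCons (-1) (v + Pi.single 0 1)) = vecCons (-1) (vq v + Pi.single 0 1) := by
    ext i
    cases i using Fin.cases <;> simp [vq, Pi.single_apply]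
  have hw : (Mq (Mtilde M + AmatB (n + 1)))⁻¹ *ᵥ vecCons (-1) (vq v + Pi.single 0 1)
      = vecCons (y 0 + 1) y := by
    apply inv_mulVec_eq_vec
    rw [Mq, map_Mtilde_add_AmatB_mulVec_cons, ← Mq, hMy, sub_add_cancel_left, add_sub_cancel_left]
  rw [hv', hw, cons_dotProduct_cons, add_dotProduct, single_one_dotProduct]
  push_cast
  ring

/-- Under the type (b) move, `Δ_k = Δ_{k'}` (with `M` and `M' = M̃ + A` assumed
invertible over `ℚ`). -/
theorem Delta_type_b (s : ℕ) (hs : 1 ≤ s) (M : Matrix (Fin s) (Fin s) ℤ)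
    (hsymm : M.IsSymm) (hinv : IsUnit (Mq M).det)
    (hinv' : IsUnit (Mq (Mtilde M + AmatB s)).det) (k : Fin s → ℤ) :
    Delta M k = Delta (Mtilde M + AmatB s) (kb k) :=
  Delta_type_b_general s hs M hinv hinv' k
end

section
/- Under the type (a) move, Θ_k = Θ_{k'}, where Θ_k = (k·u − uᵀMu)/2, Θ_{k'} = (k'·u' − (u')ᵀM'u')/2, u and u' are all-ones vectors of sizes s and s+1, M' = M̃ + A is the type (a) matrix, and k' = (0,k) + (1,−1,−1,0,…,0). -/
/-! `Θ_k` only sees `k · u` and the entry sum `uᵀ M u`; the type (a) move lowers each of them by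
one (the new row and column of `A` contribute `-1 + 2 + 2 - 4`). -/

open Matrix

lemma bform_uvec_uvec {m : ℕ} (N : Matrix (Fin m) (Fin m) ℤ) :
    bform N (uvec m) (uvec m) = ∑ i, ∑ j, N i j := by
  simp [bform, uvec, dotProduct, mulVec]

lemma sum_Mtilde {s : ℕ} (M : Matrix (Fin s) (Fin s) ℤ) :
    ∑ i, ∑ j, Mtilde M i j = ∑ i, ∑ j, M i j := by
  simp [Mtilde, Fin.sum_univ_succ, Fin.succ_ne_zero]

lemma sum_AmatA {s : ℕ} (hs : 2 ≤ s) : ∑ i, ∑ j, AmatA s i j = -1 := by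
  obtain ⟨t, rfl⟩ : ∃ t, s = t + 2 := ⟨s - 2, by omega⟩
  simp [AmatA, Fin.sum_univ_succ, Fin.val_succ]

lemma ka_dotProduct_uvec {s : ℕ} (hs : 2 ≤ s) (k : Fin s → ℤ) :
    ka k ⬝ᵥ uvec (s + 1) = k ⬝ᵥ uvec s - 1 := by
  obtain ⟨t, rfl⟩ : ∃ t, s = t + 2 := ⟨s - 2, by omega⟩
  simp only [ka, uvec, dotProduct, mul_one, Pi.add_apply, Finset.sum_add_distrib, Fin.sum_cons,
    zero_add, sub_eq_add_neg]
  congr 1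
  simp [Fin.sum_univ_succ, Fin.val_succ]

theorem Theta_type_a_general (s : ℕ) (hs : 2 ≤ s) (M : Matrix (Fin s) (Fin s) ℤ)
    (k : Fin s → ℤ) :
    Theta M k = Theta (Mtilde M + AmatA s) (ka k) := by
  simp only [Theta, ka_dotProduct_uvec hs, bform_uvec_uvec, Matrix.add_apply,
    Finset.sum_add_distrib, sum_Mtilde, sum_AmatA hs]
  push_cast
  ring

/-- Under the type (a) move, `Θ_k = Θ_{k'}` where `M' = M̃ + A` and
`k' = (0,k) + (1,-1,-1,0,…,0)`. -/
theorem Theta_type_a (s : ℕ) (hs : 2 ≤ s) (M : Matrix (Fin s) (Fin s) ℤ)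
    (hsymm : M.IsSymm) (k : Fin s → ℤ) :
    Theta M k = Theta (Mtilde M + AmatA s) (ka k) :=
  Theta_type_a_general s hs M k
end

section
/- Let M be a negative definite symmetric integer s×s matrix, k ∈ ℤ^s, u = (1,…,1), and k' = −k + 2Mu. Then: (1) Δ_{k'} = Δ_k where Δ_k = −((k−Mu)ᵀM^{−1}(k−Mu) + 3s + tr(M))/4; (2) 2χ_k(x) = 2χ_{k'}(−x) − 2⟨x,u⟩ for all x ∈ ℤ^s, where χ_k(x) = −(k·x + ⟨x,x⟩)/2; and (3) Θ_{k'} = −Θ_k where Θ_k = (k·u − ⟨u,u⟩)/2. Consequently ε_{k'}(−x) = ε_k(x) and θ_{k'}(−x) = −θ_k(x), where ε_k(x) = Δ_k + 2χ_k(x) + ⟨x,u⟩ and θ_k(x) = Θ_k + ⟨x,u⟩. -/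
open Matrix

section SpincConjugation

variable {m : ℕ} (M : Matrix (Fin m) (Fin m) ℤ) (k : Fin m → ℤ)

lemma neg_add_two_nsmul_sub {G : Type*} [AddCommGroup G] (a b : G) :
    -a + 2 • b - b = -(a - b) := by
  rw [two_nsmul]; abel

lemma vq_neg (x : Fin m → ℤ) : vq (-x) = -vq x := by
  funext i; simp [vq]

lemma bform_neg_left (x y : Fin m → ℤ) : bform M (-x) y = -bform M x y :=
  neg_dotProduct x _

lemma bform_neg_right (x y : Fin m → ℤ) : bform M x (-y) = -bform M x y := by
  rw [bform, mulVec_neg, dotProduct_neg, bform]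

lemma conj_dotProduct (y : Fin m → ℤ) :
    (-k + 2 • M *ᵥ uvec m) ⬝ᵥ y = -(k ⬝ᵥ y) + 2 * bform M y (uvec m) := by
  rw [add_dotProduct, neg_dotProduct, smul_dotProduct, dotProduct_comm (M *ᵥ uvec m), bform,
    nsmul_eq_mul, Nat.cast_ofNat]

/-- `Δ_k` only depends on `k - Mu` through a quadratic form, which is even. -/
lemma Delta_conj : Delta M (-k + 2 • M *ᵥ uvec m) = Delta M k := by
  simp only [Delta, neg_add_two_nsmul_sub, vq_neg, mulVec_neg, dotProduct_neg, neg_dotProduct,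
    neg_neg]

lemma chi_conj (x : Fin m → ℤ) :
    2 * chi M k x = 2 * chi M (-k + 2 • M *ᵥ uvec m) (-x) - 2 * (bform M x (uvec m) : ℚ) := by
  simp only [chi, conj_dotProduct, dotProduct_neg, bform_neg_left, bform_neg_right, neg_neg]
  push_cast
  ring

lemma Theta_conj : Theta M (-k + 2 • M *ᵥ uvec m) = -Theta M k := by
  simp only [Theta, conj_dotProduct]
  push_cast
  ring

lemma eps_conj (x : Fin m → ℤ) : eps M (-k + 2 • M *ᵥ uvec m) (-x) = eps M k x := by
  simp only [eps, Delta_conj, bform_neg_left, Int.cast_neg]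
  linarith [chi_conj M k x]

lemma theta_conj (x : Fin m → ℤ) : theta M (-k + 2 • M *ᵥ uvec m) (-x) = -theta M k x := by
  simp only [theta, Theta_conj, bform_neg_left]
  push_cast
  ring

end SpincConjugation

theorem spinc_conjugation_general (s : ℕ) (M : Matrix (Fin s) (Fin s) ℤ) (k : Fin s → ℤ) :
    Delta M (-k + 2 • M.mulVec (uvec s)) = Delta M k ∧
    (∀ x : Fin s → ℤ,
      2 * chi M k x = 2 * chi M (-k + 2 • M.mulVec (uvec s)) (-x)
        - 2 * (bform M x (uvec s) : ℚ)) ∧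
    Theta M (-k + 2 • M.mulVec (uvec s)) = -Theta M k ∧
    (∀ x : Fin s → ℤ, eps M (-k + 2 • M.mulVec (uvec s)) (-x) = eps M k x) ∧
    (∀ x : Fin s → ℤ, theta M (-k + 2 • M.mulVec (uvec s)) (-x) = -theta M k x) :=
  ⟨Delta_conj M k, chi_conj M k, Theta_conj M k, eps_conj M k, theta_conj M k⟩

/-- Spin^c conjugation: with `M` negative definite symmetric and `k' = -k + 2Mu`,
one has (1) `Δ_{k'} = Δ_k`, (2) `2χ_k(x) = 2χ_{k'}(-x) - 2⟨x,u⟩`,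
(3) `Θ_{k'} = -Θ_k`, and consequently `ε_{k'}(-x) = ε_k(x)` and
`θ_{k'}(-x) = -θ_k(x)`. -/
theorem spinc_conjugation (s : ℕ) (M : Matrix (Fin s) (Fin s) ℤ) (hsymm : M.IsSymm)
    (hneg : ∀ x : Fin s → ℤ, x ≠ 0 → bform M x x < 0) (k : Fin s → ℤ) :
    Delta M (-k + 2 • M.mulVec (uvec s)) = Delta M k ∧
    (∀ x : Fin s → ℤ,
      2 * chi M k x = 2 * chi M (-k + 2 • M.mulVec (uvec s)) (-x)
        - 2 * (bform M x (uvec s) : ℚ)) ∧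
    Theta M (-k + 2 • M.mulVec (uvec s)) = -Theta M k ∧
    (∀ x : Fin s → ℤ, eps M (-k + 2 • M.mulVec (uvec s)) (-x) = eps M k x) ∧
    (∀ x : Fin s → ℤ, theta M (-k + 2 • M.mulVec (uvec s)) (-x) = -theta M k x) :=
  spinc_conjugation_general s M k
end
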